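/- The sparing number of the Frucht graph is 3. -/

import Mathlib

open Pointwise

/-- The induced set-label on unordered pairs: the sumset of the two vertex labels. -/
def edgeLabel {V : Type*} (f : V → Finset ℕ) : Sym2 V → Finset ℕ :=
  Sym2.lift ⟨fun u v => f u + f v, fun u v => add_comm (f u) (f v)⟩

/-- `f` is a weak integer additive set-indexer of `G`. -/
structure IsWeakIASI {V : Type*} (G : SimpleGraph V) (f : V → Finset ℕ) : Prop where
  nonempty : ∀ v, (f v).Nonempty
  injective : Function.Injective f
  edgeInjective : Set.InjOn (edgeLabel f) G.edgeSet
  weak : ∀ u v, G.Adj u v → (edgeLabel f s(u, v)).card = max (f u).card (f v).card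

/-- The number of mono-indexed edges of `G` under the labeling `f`. -/
noncomputable def monoEdgeCount {V : Type*} (G : SimpleGraph V) (f : V → Finset ℕ) : ℕ :=
  {e ∈ G.edgeSet | (edgeLabel f e).card = 1}.ncard

/-- The sparing number: the minimum number of mono-indexed edges over all weak IASIs. -/
noncomputable def sparingNumber {V : Type*} (G : SimpleGraph V) : ℕ :=
  sInf {n | ∃ f, IsWeakIASI G f ∧ monoEdgeCount G f = n}

/-- The Frucht graph, given by the LCF notation `[-5,-2,-4,2,5,-2,2,5,-2,-5,4,2]`:
a Hamiltonian cycle on `Fin 12` together with chords `i ~ i + aᵢ (mod 12)`,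
where the offsets `(-5,-2,-4,2,5,-2,2,5,-2,-5,4,2)` are taken mod 12. -/
def fruchtGraph : SimpleGraph (Fin 12) :=
  SimpleGraph.fromRel (fun i j =>
    j = i + 1 ∨ j = i + ![7, 10, 8, 2, 5, 10, 2, 5, 10, 7, 4, 2] i)

/-!
By Cauchy–Davenport, `#(A + B) ≥ #A + #B - 1` for nonempty `A B : Finset ℕ`, so under a weak IASI
no two adjacent vertices both carry labels with two or more elements: the vertices with
non-singleton labels form an independent set `S`, and an edge is mono-indexed exactly when it
avoids `S`. In a `3`-regular graph at most `3 * #S` edges meet `S`. The Frucht graph has `18`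
edges and its vertices split into the five cliques `{0, 11}, {1, 2}, {3, 4, 5}, {6, 7, 8},
{9, 10}`, so `#S ≤ 5` and at least `18 - 15 = 3` edges are mono-indexed. An explicit labeling
attains `3`.
-/

open Finset SimpleGraph

namespace Finset

variable {α : Type*} [LinearOrder α] [Add α] [IsCancelAdd α]
  [AddLeftMono α] [AddRightMono α] {A B : Finset α}

theorem card_add_eq_one_iff (hA : A.Nonempty) (hB : B.Nonempty) :
    #(A + B) = 1 ↔ #A = 1 ∧ #B = 1 := by
  have hcd := cauchy_davenport_add_of_linearOrder_isCancelAdd hA hB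
  have hle : #(A + B) ≤ #A * #B := card_add_le
  have := hA.card_pos
  have := hB.card_pos
  constructor
  · intro h
    omega
  · rintro ⟨hA1, hB1⟩
    rw [hA1, hB1] at hle
    omega

theorem card_eq_one_or_card_eq_one_of_card_add_le_max (hA : A.Nonempty) (hB : B.Nonempty)
    (h : #(A + B) ≤ max #A #B) : #A = 1 ∨ #B = 1 := by
  have hcd := cauchy_davenport_add_of_linearOrder_isCancelAdd hA hB
  have := hA.card_pos
  have := hB.card_pos
  omega

end Finset

section IASI

variable {V : Type*} {G : SimpleGraph V} {f : V → Finset ℕ}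

theorem card_edgeLabel_eq_one_iff (hf : ∀ v, (f v).Nonempty) (e : Sym2 V) :
    #(edgeLabel f e) = 1 ↔ ∀ v ∈ e, #(f v) = 1 := by
  induction e using Sym2.ind with
  | h u v =>
    simp only [edgeLabel, Sym2.lift_mk, Sym2.mem_iff, forall_eq_or_imp, forall_eq]
    exact card_add_eq_one_iff (hf u) (hf v)

theorem monoEdgeCount_eq_card_filter [Fintype V] [DecidableRel G.Adj] :
    monoEdgeCount G f = #{e ∈ G.edgeFinset | #(edgeLabel f e) = 1} := by
  rw [monoEdgeCount, ← Set.ncard_coe_finset, coe_filter]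
  simp only [mem_edgeFinset]

namespace IsWeakIASI

theorem card_eq_one_or_card_eq_one (hf : IsWeakIASI G f) {u v : V} (huv : G.Adj u v) :
    #(f u) = 1 ∨ #(f v) = 1 :=
  card_eq_one_or_card_eq_one_of_card_add_le_max (hf.nonempty u) (hf.nonempty v)
    (hf.weak u v huv).le

theorem isIndepSet_card_ne_one (hf : IsWeakIASI G f) : G.IsIndepSet {v | #(f v) ≠ 1} :=
  fun _ hu _ hv _ huv => (hf.card_eq_one_or_card_eq_one huv).elim hu hv

end IsWeakIASI

end IASI

namespace SimpleGraph

variable {V : Type*} {G : SimpleGraph V}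

theorem indepNum_le_of_colorable_compl [Finite V] {n : ℕ} (h : Gᶜ.Colorable n) :
    G.indepNum ≤ n := by
  obtain ⟨s, hs⟩ := G.exists_isNIndepSet_indepNum
  rw [← hs.card_eq]
  exact (G.isClique_compl.2 hs.isIndepSet).card_le_of_colorable h

theorem card_edgeFinset_le_card_filter_add_sum_degree [Fintype V] [DecidableEq V]
    [DecidableRel G.Adj] (s : Finset V) :
    #G.edgeFinset ≤ #{e ∈ G.edgeFinset | ∀ v ∈ e, v ∉ s} + ∑ v ∈ s, G.degree v := by
  have hmeet : {e ∈ G.edgeFinset | ¬∀ v ∈ e, v ∉ s} ⊆ s.biUnion (G.incidenceFinset ·) := by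
    intro e he
    simp only [mem_filter, mem_edgeFinset, not_forall, not_not] at he
    obtain ⟨he, v, hve, hvs⟩ := he
    exact mem_biUnion.2 ⟨v, hvs, (G.mem_incidenceFinset v e).2 ⟨he, hve⟩⟩
  calc #G.edgeFinset
      = #{e ∈ G.edgeFinset | ∀ v ∈ e, v ∉ s} + #{e ∈ G.edgeFinset | ¬∀ v ∈ e, v ∉ s} :=
        (card_filter_add_card_filter_not _).symm
    _ ≤ #{e ∈ G.edgeFinset | ∀ v ∈ e, v ∉ s} + ∑ v ∈ s, #(G.incidenceFinset v) := by
        gcongr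
        exact (card_le_card hmeet).trans card_biUnion_le
    _ = #{e ∈ G.edgeFinset | ∀ v ∈ e, v ∉ s} + ∑ v ∈ s, G.degree v := by
        simp only [card_incidenceFinset_eq_degree]

end SimpleGraph

theorem IsWeakIASI.card_edgeFinset_le_monoEdgeCount_add {V : Type*} [Fintype V]
    {G : SimpleGraph V} [DecidableRel G.Adj] {f : V → Finset ℕ} {d : ℕ}
    (hG : G.IsRegularOfDegree d) (hf : IsWeakIASI G f) :
    #G.edgeFinset ≤ monoEdgeCount G f + d * G.indepNum := by
  classical
  set s : Finset V := {v | #(f v) ≠ 1}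
  have hs : G.IsIndepSet s := by
    simpa only [s, coe_filter, mem_univ, true_and] using hf.isIndepSet_card_ne_one
  have hmono :
      {e ∈ G.edgeFinset | ∀ v ∈ e, v ∉ s} = {e ∈ G.edgeFinset | #(edgeLabel f e) = 1} := by
    refine filter_congr fun e _ => ?_
    simp only [card_edgeLabel_eq_one_iff hf.nonempty, s, mem_filter, mem_univ, true_and, not_not]
  calc #G.edgeFinset
      ≤ #{e ∈ G.edgeFinset | ∀ v ∈ e, v ∉ s} + ∑ v ∈ s, G.degree v :=
        G.card_edgeFinset_le_card_filter_add_sum_degree s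
    _ = monoEdgeCount G f + d * #s := by
        rw [hmono, monoEdgeCount_eq_card_filter, sum_congr rfl fun v _ => hG v, sum_const,
          smul_eq_mul, mul_comm]
    _ ≤ monoEdgeCount G f + d * G.indepNum := by
        gcongr
        exact hs.card_le_indepNum

instance : DecidableRel fruchtGraph.Adj := fun a b =>
  inferInstanceAs (Decidable (a ≠ b ∧ _))

theorem fruchtGraph_isRegularOfDegree : fruchtGraph.IsRegularOfDegree 3 := by
  unfold IsRegularOfDegree
  decide

theorem card_edgeFinset_fruchtGraph : #fruchtGraph.edgeFinset = 18 := by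
  decide

theorem fruchtGraph_compl_colorable : fruchtGraphᶜ.Colorable 5 := by
  let c : Fin 12 → Fin 5 := ![0, 1, 1, 2, 2, 2, 3, 3, 3, 4, 4, 0]
  have hc : ∀ u v, u ≠ v → c u = c v → fruchtGraph.Adj u v := by decide
  exact ⟨Coloring.mk c fun {u v} huv hcuv => (compl_adj _ _ _).1 huv |>.2 (hc u v huv.ne hcuv)⟩

theorem fruchtGraph_indepNum_le : fruchtGraph.indepNum ≤ 5 :=
  indepNum_le_of_colorable_compl fruchtGraph_compl_colorable

def fruchtLabel : Fin 12 → Finset ℕ :=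
  ![{4}, {18}, {3, 15}, {27}, {25}, {14, 24}, {24}, {15, 20}, {2}, {12, 25}, {8}, {3, 6}]

set_option maxRecDepth 10000 in
theorem fruchtLabel_isWeakIASI : IsWeakIASI fruchtGraph fruchtLabel where
  nonempty := by decide
  injective := by
    unfold Function.Injective
    decide
  edgeInjective := by
    have h : ∀ a ∈ fruchtGraph.edgeFinset, ∀ b ∈ fruchtGraph.edgeFinset,
        edgeLabel fruchtLabel a = edgeLabel fruchtLabel b → a = b := by decide
    exact fun a ha b hb => h a (mem_edgeFinset.2 ha) b (mem_edgeFinset.2 hb)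
  weak := by decide

theorem monoEdgeCount_fruchtLabel : monoEdgeCount fruchtGraph fruchtLabel = 3 := by
  rw [monoEdgeCount_eq_card_filter]
  decide

/-- The sparing number of the Frucht graph is `3`. -/
theorem sparingNumber_frucht : sparingNumber fruchtGraph = 3 := by
  have hmem : 3 ∈ {n | ∃ f, IsWeakIASI fruchtGraph f ∧ monoEdgeCount fruchtGraph f = n} :=
    ⟨fruchtLabel, fruchtLabel_isWeakIASI, monoEdgeCount_fruchtLabel⟩
  refine le_antisymm (Nat.sInf_le hmem) (le_csInf ⟨3, hmem⟩ ?_)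
  rintro n ⟨f, hf, rfl⟩
  have hcount := hf.card_edgeFinset_le_monoEdgeCount_add fruchtGraph_isRegularOfDegree
  have hindep := fruchtGraph_indepNum_le
  rw [card_edgeFinset_fruchtGraph] at hcount
  omega
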